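/- Let G be the join of the complement of the 6-cycle C_6 with the empty graph on 3 vertices (i.e., G = \overline{C_6} ∨ \overline{K_3}), and let e_1, e_2, e_3 be three distinct non-edges of G such that e_1 and e_2 share a common endpoint. Then G + {e_1, e_2, e_3} contains K_8^= as a minor. -/

import Mathlib

open SimpleGraph

/-- The complete 5-partite graph `K_{2,2,2,2,2}`. -/
abbrev K22222 : SimpleGraph (Σ _ : Fin 5, Fin 2) :=
  SimpleGraph.completeMultipartiteGraph fun _ => Fin 2

/-- An `(H₁, H₂, k)`-cockade: any graph isomorphic to `H₁` or `H₂` is one, and identifying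
cliques of size `k` in two cockades yields one (expressed via a decomposition of the glued
graph into the two overlapping pieces). -/
inductive IsCockade {α β : Type} (H₁ : SimpleGraph α) (H₂ : SimpleGraph β) (k : ℕ) :
    {V : Type} → SimpleGraph V → Prop
  | base₁ {V : Type} (G : SimpleGraph V) : Nonempty (G ≃g H₁) → IsCockade H₁ H₂ k G
  | base₂ {V : Type} (G : SimpleGraph V) : Nonempty (G ≃g H₂) → IsCockade H₁ H₂ k G
  | glue {V : Type} (G : SimpleGraph V) (A B : Set V) :
      A ∪ B = Set.univ → ¬ A ⊆ B → ¬ B ⊆ A →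
      (A ∩ B).ncard = k → G.IsClique (A ∩ B) →
      (∀ u ∈ A \ B, ∀ v ∈ B \ A, ¬ G.Adj u v) →
      IsCockade H₁ H₂ k (G.induce A) → IsCockade H₁ H₂ k (G.induce B) →
      IsCockade H₁ H₂ k G

/-- A `(K₈, K_{2,2,2,2,2}, 5)`-cockade. -/
abbrev Cockade85 {V : Type} (G : SimpleGraph V) : Prop :=
  IsCockade (⊤ : SimpleGraph (Fin 8)) K22222 5 G

/-- `H` is a minor of `G`, via branch sets. -/
def IsMinorOf {W V : Type} (H : SimpleGraph W) (G : SimpleGraph V) : Prop :=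
  ∃ B : W → Set V,
    (∀ w, (B w).Nonempty) ∧
    (∀ w, (G.induce (B w)).Connected) ∧
    (Pairwise fun w₁ w₂ => Disjoint (B w₁) (B w₂)) ∧
    (∀ w₁ w₂, H.Adj w₁ w₂ → ∃ u ∈ B w₁, ∃ v ∈ B w₂, G.Adj u v)

/-- `G` contains `K_t` minus two edges as a minor (either of the two nonisomorphic graphs). -/
def HasKEqMinor (t : ℕ) {V : Type} (G : SimpleGraph V) : Prop :=
  ∃ e₁ e₂ : Sym2 (Fin t), e₁ ≠ e₂ ∧ ¬ e₁.IsDiag ∧ ¬ e₂.IsDiag ∧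
    IsMinorOf ((⊤ : SimpleGraph (Fin t)).deleteEdges {e₁, e₂}) G


/-- Add to `G` a new vertex (the `none` vertex) adjacent exactly to the vertices in `N`. -/
def addVertex {V : Type} (G : SimpleGraph V) (N : Set V) : SimpleGraph (Option V) where
  Adj a b :=
    match a, b with
    | some u, some w => G.Adj u w
    | some u, none => u ∈ N
    | none, some w => w ∈ N
    | none, none => False
  symm := by constructor; rintro (_ | u) (_ | w) h <;> first | exact h | exact h.symm
  loopless := by
    constructor
    rintro (_ | u) h
    · exact h
    · exact G.loopless.irrefl u h

/-- The graph obtained from `G` by contracting the edge `xy` (the merged vertex is `x`,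
and `y` is deleted). -/
def contractEdge {V : Type} (G : SimpleGraph V) (x y : V) :
    SimpleGraph {z : V // z ≠ y} where
  Adj a b := a ≠ b ∧
    (G.Adj a b ∨ ((a : V) = x ∧ G.Adj y b) ∨ ((b : V) = x ∧ G.Adj y a))
  symm := by
    constructor
    rintro a b ⟨hne, h⟩
    refine ⟨hne.symm, ?_⟩
    rcases h with h | ⟨h1, h2⟩ | ⟨h1, h2⟩
    · exact Or.inl h.symm
    · exact Or.inr (Or.inr ⟨h1, h2⟩)
    · exact Or.inr (Or.inl ⟨h1, h2⟩)
  loopless := ⟨fun a h => h.1 rfl⟩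

/-- The join of two graphs. -/
def joinGraph {α β : Type} (G : SimpleGraph α) (H : SimpleGraph β) : SimpleGraph (α ⊕ β) where
  Adj a b :=
    match a, b with
    | .inl a, .inl b => G.Adj a b
    | .inr a, .inr b => H.Adj a b
    | .inl _, .inr _ => True
    | .inr _, .inl _ => True
  symm := by constructor; rintro (a | a) (b | b) h <;> first | exact h.symm | trivial
  loopless := by constructor; rintro (a | a) h; exacts [G.loopless.irrefl a h, H.loopless.irrefl a h]

/-- The disjoint union of two graphs. -/
def disjUnionGraph {α β : Type} (G : SimpleGraph α) (H : SimpleGraph β) :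
    SimpleGraph (α ⊕ β) where
  Adj a b :=
    match a, b with
    | .inl a, .inl b => G.Adj a b
    | .inr a, .inr b => H.Adj a b
    | .inl _, .inr _ => False
    | .inr _, .inl _ => False
  symm := by constructor; rintro (a | a) (b | b) h <;> first | exact h.symm | exact h
  loopless := by constructor; rintro (a | a) h; exacts [G.loopless.irrefl a h, H.loopless.irrefl a h]

/-- The cycle graph `C_n` on `ZMod n`. -/
def cycleG (n : ℕ) [NeZero n] : SimpleGraph (ZMod n) :=
  SimpleGraph.fromRel fun i j => i - j = 1

/-- The Petersen graph, as the Kneser graph on 2-element subsets of a 5-element set. -/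
def petersen : SimpleGraph {s : Finset (Fin 5) // s.card = 2} where
  Adj a b := Disjoint a.1 b.1
  symm := ⟨fun _ _ h => h.symm⟩
  loopless := by
    constructor
    intro a h
    have h2 := a.2
    rw [disjoint_self.mp h] at h2
    simp at h2

/-- `G` is `k`-connected: more than `k` vertices, and removing fewer than `k` vertices
leaves a connected graph. -/
def IsKConnected {V : Type} [Fintype V] (k : ℕ) (G : SimpleGraph V) : Prop :=
  k < Fintype.card V ∧ ∀ S : Set V, S.ncard < k → (G.induce Sᶜ).Connected

/-- `G - v` has a `K₄` minor rooted at the 4-element set `T` (with `v ∉ T`): four disjoint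
branch sets avoiding `v`, each inducing a connected subgraph, each meeting `T` in exactly
one vertex, and pairwise joined by an edge. -/
def HasRootedK4MinorAvoiding {V : Type} (G : SimpleGraph V) (T : Set V) (v : V) : Prop :=
  ∃ (t : Fin 4 → V) (B : Fin 4 → Set V),
    Function.Injective t ∧ Set.range t = T ∧
    (∀ i, v ∉ B i) ∧ (∀ i, B i ∩ T = {t i}) ∧
    (∀ i, (G.induce (B i)).Connected) ∧
    (Pairwise fun i j => Disjoint (B i) (B j)) ∧
    (Pairwise fun i j => ∃ a ∈ B i, ∃ b ∈ B j, G.Adj a b)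


/-- The join of the complement of `C₆` with three isolated vertices. -/
abbrev C6barJoinK3bar : SimpleGraph (ZMod 6 ⊕ Fin 3) :=
  joinGraph (cycleG 6)ᶜ (⊥ : SimpleGraph (Fin 3))

/-!
The non-edges of `G` are the six edges of `C₆` and the three pairs inside `K̄₃`. Contracting an
antipodal pair `{i, i + 3}` of `C̄₆`, or an edge `ik` with `i` in `C̄₆` and `k` in `K̄₃`, makes the
merged vertex universal and leaves five non-edges: the two `C₆`-edges avoiding `i` and `i + 3`
together with the three pairs in `K̄₃`, respectively the four `C₆`-edges avoiding `i` together with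
the pair in `K̄₃` avoiding `k`. If two of `e₁, e₂, e₃` lie in `K̄₃`, contract an antipodal pair
avoiding the third; otherwise the `C₆`-edges among them miss some vertex `i` (as `e₁` and `e₂` share
an endpoint), and contract `i` with a vertex of `K̄₃` missed by the at most one added edge inside
`K̄₃`. Either way the contraction has at most two non-edges on 8 vertices, so it contains `K₈` minus
two edges, and a subgraph of a contraction is a minor. The case analysis is checked by exhaustive
computation.
-/

open Finset

instance joinGraph.instDecidableRelAdj {α β : Type} (G : SimpleGraph α) (H : SimpleGraph β)
    [DecidableRel G.Adj] [DecidableRel H.Adj] : DecidableRel (joinGraph G H).Adj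
  | .inl a, .inl b => inferInstanceAs (Decidable (G.Adj a b))
  | .inl _, .inr _ => inferInstanceAs (Decidable True)
  | .inr _, .inl _ => inferInstanceAs (Decidable True)
  | .inr a, .inr b => inferInstanceAs (Decidable (H.Adj a b))

instance cycleG.instDecidableRelAdj (n : ℕ) [NeZero n] : DecidableRel (cycleG n).Adj :=
  fun a b => decidable_of_iff' _ (fromRel_adj _ a b)

instance contractEdge.instDecidableRelAdj {V : Type} [DecidableEq V] (G : SimpleGraph V)
    [DecidableRel G.Adj] (x y : V) : DecidableRel (contractEdge G x y).Adj :=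
  fun a b => inferInstanceAs (Decidable (a ≠ b ∧ _))

section ContractEdge

variable {V : Type} {G : SimpleGraph V} {x y : V}

def contractEdgeFiber (x y : V) (z : {z : V // z ≠ y}) : Set V :=
  {v | v = z ∨ ((z : V) = x ∧ v = y)}

lemma self_mem_contractEdgeFiber (z : {z : V // z ≠ y}) : (z : V) ∈ contractEdgeFiber x y z :=
  Or.inl rfl

lemma mem_contractEdgeFiber_of_eq {z : {z : V // z ≠ y}} (hz : (z : V) = x) :
    y ∈ contractEdgeFiber x y z :=
  Or.inr ⟨hz, rfl⟩

lemma connected_induce_contractEdgeFiber (hxy : G.Adj x y) (z : {z : V // z ≠ y}) :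
    (G.induce (contractEdgeFiber x y z)).Connected := by
  by_cases hz : (z : V) = x
  · have : contractEdgeFiber x y z = {x, y} := by ext; simp [contractEdgeFiber, hz]
    rw [this]
    exact induce_pair_connected_of_adj hxy
  · have : contractEdgeFiber x y z = {(z : V)} := by ext; simp [contractEdgeFiber, hz]
    rw [this, induce_singleton_eq_top]
    exact connected_top

lemma pairwise_disjoint_contractEdgeFiber :
    Pairwise fun a b : {z : V // z ≠ y} =>
      Disjoint (contractEdgeFiber x y a) (contractEdgeFiber x y b) := by
  intro a b hab
  rw [Set.disjoint_left]
  rintro v (rfl | ⟨ha, rfl⟩) (hb | ⟨hb, hv⟩)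
  · exact hab (Subtype.ext hb)
  · exact a.2 hv
  · exact b.2 hb.symm
  · exact hab (Subtype.ext (ha.trans hb.symm))

lemma exists_adj_of_contractEdge_adj {a b : {z : V // z ≠ y}} (h : (contractEdge G x y).Adj a b) :
    ∃ u ∈ contractEdgeFiber x y a, ∃ v ∈ contractEdgeFiber x y b, G.Adj u v := by
  obtain ⟨-, h | ⟨ha, h⟩ | ⟨hb, h⟩⟩ := h
  · exact ⟨a, self_mem_contractEdgeFiber a, b, self_mem_contractEdgeFiber b, h⟩
  · exact ⟨y, mem_contractEdgeFiber_of_eq ha, b, self_mem_contractEdgeFiber b, h⟩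
  · exact ⟨a, self_mem_contractEdgeFiber a, y, mem_contractEdgeFiber_of_eq hb, h.symm⟩

theorem isMinorOf_of_copy_contractEdge {W : Type} {H : SimpleGraph W} (hxy : G.Adj x y)
    (f : Copy H (contractEdge G x y)) : IsMinorOf H G :=
  ⟨fun w => contractEdgeFiber x y (f w), fun w => ⟨_, self_mem_contractEdgeFiber (f w)⟩,
    fun w => connected_induce_contractEdgeFiber hxy (f w),
    fun _ _ h => pairwise_disjoint_contractEdgeFiber (f.injective.ne h),
    fun _ _ h => exists_adj_of_contractEdge_adj (f.toHom.map_adj h)⟩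

end ContractEdge

lemma mem_edgeSet_compl {W : Type} {K : SimpleGraph W} {e : Sym2 W} :
    e ∈ Kᶜ.edgeSet ↔ ¬ e.IsDiag ∧ e ∉ K.edgeSet := by
  induction e using Sym2.ind
  simp [compl_adj]

theorem exists_deleteEdges_top_le_of_card_compl_edgeFinset_le_two {W : Type} [Fintype W]
    [DecidableEq W] {K : SimpleGraph W} [DecidableRel K.Adj] (hW : 3 ≤ Fintype.card W)
    (hK : #Kᶜ.edgeFinset ≤ 2) :
    ∃ f₁ f₂ : Sym2 W, f₁ ≠ f₂ ∧ ¬ f₁.IsDiag ∧ ¬ f₂.IsDiag ∧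
      (⊤ : SimpleGraph W).deleteEdges {f₁, f₂} ≤ K := by
  have htop : 2 ≤ #(⊤ : SimpleGraph W).edgeFinset := by
    rw [card_edgeFinset_top_eq_card_choose_two]
    exact (Nat.choose_le_choose 2 hW).trans' (by decide)
  obtain ⟨u, hKu, hu, hu2⟩ := exists_subsuperset_card_eq (edgeFinset_mono le_top) hK htop
  obtain ⟨f₁, f₂, hf, rfl⟩ := card_eq_two.mp hu2
  have hdiag : ∀ f ∈ ({f₁, f₂} : Finset (Sym2 W)), ¬ f.IsDiag := fun f hf => by
    simpa using hu hf
  refine ⟨f₁, f₂, hf, hdiag _ (by simp), hdiag _ (by simp), fun a b hab => ?_⟩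
  rw [deleteEdges_adj, top_adj] at hab
  by_contra hK'
  have := hKu (mem_edgeFinset.mpr (show s(a, b) ∈ Kᶜ.edgeSet from ⟨hab.1, hK'⟩))
  exact hab.2 (by simpa using this)

theorem hasKEqMinor_of_card_compl_edgeFinset_contractEdge_le_two {V : Type} [Fintype V]
    [DecidableEq V] {G : SimpleGraph V} [DecidableRel G.Adj] {t : ℕ} {x y : V} (ht : 3 ≤ t)
    (hV : Fintype.card V = t + 1) (hxy : G.Adj x y)
    (hK : #(contractEdge G x y)ᶜ.edgeFinset ≤ 2) : HasKEqMinor t G := by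
  have hW : Fintype.card {z : V // z ≠ y} = t := by
    rw [Fintype.card_subtype_compl, hV, Fintype.card_subtype_eq, Nat.add_sub_cancel]
  obtain ⟨f₁, f₂, hf, hf₁, hf₂, hle⟩ :=
    exists_deleteEdges_top_le_of_card_compl_edgeFinset_le_two (hW ▸ ht) hK
  let e : Fin t ≃ {z : V // z ≠ y} := (Fintype.equivFinOfCardEq hW).symm
  have hmap : ∀ a b, s(a, b) = s(e a, e b).map e.symm := by simp
  refine ⟨f₁.map e.symm, f₂.map e.symm, (Sym2.map.injective e.symm.injective).ne hf,
    by rwa [Sym2.isDiag_map e.symm.injective], by rwa [Sym2.isDiag_map e.symm.injective],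
    isMinorOf_of_copy_contractEdge hxy ⟨⟨e, fun {a b} hab => hle ?_⟩, e.injective⟩⟩
  rw [deleteEdges_adj, top_adj] at hab ⊢
  exact ⟨e.injective.ne hab.1, fun h => hab.2 <| by
    rw [hmap, ← Set.image_pair]
    exact Set.mem_image_of_mem _ h⟩

set_option synthInstance.maxSize 512 in
theorem C6barJoinK3bar_sup_exists_adj_card_compl_edgeFinset_contractEdge_le_two :
    ∀ e₁ ∈ C6barJoinK3barᶜ.edgeFinset, ∀ e₂ ∈ C6barJoinK3barᶜ.edgeFinset,
    ∀ e₃ ∈ C6barJoinK3barᶜ.edgeFinset, e₁ ≠ e₂ → e₁ ≠ e₃ → e₂ ≠ e₃ → (∃ x, x ∈ e₁ ∧ x ∈ e₂) →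
    ∃ x y, (C6barJoinK3bar ⊔ fromEdgeSet {e₁, e₂, e₃}).Adj x y ∧
      #(contractEdge (C6barJoinK3bar ⊔ fromEdgeSet {e₁, e₂, e₃}) x y)ᶜ.edgeFinset ≤ 2 := by
  decide +kernel

theorem C6barK3bar_add_three_edges (e₁ e₂ e₃ : Sym2 (ZMod 6 ⊕ Fin 3))
    (h12 : e₁ ≠ e₂) (h13 : e₁ ≠ e₃) (h23 : e₂ ≠ e₃)
    (hne : ∀ e ∈ ({e₁, e₂, e₃} : Set (Sym2 (ZMod 6 ⊕ Fin 3))),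
      ¬ e.IsDiag ∧ e ∉ C6barJoinK3bar.edgeSet)
    (hshare : ∃ x, x ∈ e₁ ∧ x ∈ e₂) :
    HasKEqMinor 8 (C6barJoinK3bar ⊔ SimpleGraph.fromEdgeSet {e₁, e₂, e₃}) := by
  have hnon : ∀ e ∈ ({e₁, e₂, e₃} : Set _), e ∈ C6barJoinK3barᶜ.edgeFinset := fun e he => by
    simpa [mem_edgeSet_compl] using hne e he
  obtain ⟨x, y, hxy, hK⟩ := C6barJoinK3bar_sup_exists_adj_card_compl_edgeFinset_contractEdge_le_two
    e₁ (hnon e₁ (by simp)) e₂ (hnon e₂ (by simp)) e₃ (hnon e₃ (by simp)) h12 h13 h23 hshare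
  exact hasKEqMinor_of_card_compl_edgeFinset_contractEdge_le_two (by norm_num) rfl hxy hK
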